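/- Let A be a complex Banach algebra with unit and sub-multiplicative norm, let X, Y ∈ A, let (C_j)_{j≥2} be a sequence in A, and let λ ≥ 0 be such that the series Σ_{j≥2} λ^j ‖C_j‖ converges. Then the sequence of truncated symmetric products Ψₙ(λ) = e^{λX/2} e^{λY/2} e^{λ²C₂} e^{λ³C₃} ⋯ e^{λⁿCₙ} · e^{λⁿCₙ} ⋯ e^{λ³C₃} e^{λ²C₂} e^{λY/2} e^{λX/2} is a Cauchy sequence in A, and hence converges. -/

import Mathlib

/-!
Each half of `Ψₙ(λ)` is a partial product of the factors `uₖ = e^{λ^{k+2} C_{k+2}}`, extended on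
the right for the left half and on the left for the right half. Since `e^Z - 1 = O(Z)` near `0`,
the series `Σ ‖uₖ - 1‖` converges along with `Σ λ^j ‖C_j‖`. A sequence whose increments satisfy
`‖x (n+1) - x n‖ ≤ aₙ ‖x n‖` with `Σ aₙ < ∞` stays bounded by `‖x 0‖ e^{Σ aₙ}`, so its increments
are summable and it is Cauchy. Both halves therefore converge, and so does their product.
-/

open Filter Asymptotics

/-- The truncated symmetric (palindromic) Zassenhaus product
`Ψₙ(λ) = e^{λX/2} e^{λY/2} e^{λ²C₂} ⋯ e^{λⁿCₙ} · e^{λⁿCₙ} ⋯ e^{λ²C₂} e^{λY/2} e^{λX/2}`. -/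
noncomputable def symmZassenhausProd {𝒜 : Type*} [NormedRing 𝒜] [NormedAlgebra ℂ 𝒜]
    (X Y : 𝒜) (C : ℕ → 𝒜) (n : ℕ) (l : ℝ) : 𝒜 :=
  NormedSpace.exp ((l / 2) • X) * NormedSpace.exp ((l / 2) • Y) *
    ((List.range' 2 (n - 1)).map fun j => NormedSpace.exp (l ^ j • C j)).prod *
    (((List.range' 2 (n - 1)).map fun j => NormedSpace.exp (l ^ j • C j)).reverse).prod *
    NormedSpace.exp ((l / 2) • Y) * NormedSpace.exp ((l / 2) • X)

section RelativeIncrements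

variable {E : Type*} [SeminormedAddCommGroup E] {x : ℕ → E} {a : ℕ → ℝ}

lemma norm_le_mul_exp_sum_of_norm_succ_sub_le (hx : ∀ n, ‖x (n + 1) - x n‖ ≤ a n * ‖x n‖)
    (n : ℕ) : ‖x n‖ ≤ ‖x 0‖ * Real.exp (∑ k ∈ Finset.range n, a k) := by
  induction n with
  | zero => simp
  | succ n ih =>
    calc ‖x (n + 1)‖ ≤ ‖x n‖ + ‖x (n + 1) - x n‖ := norm_le_norm_add_norm_sub' _ _
      _ ≤ (a n + 1) * ‖x n‖ := by linarith [hx n]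
      _ ≤ Real.exp (a n) * (‖x 0‖ * Real.exp (∑ k ∈ Finset.range n, a k)) :=
          mul_le_mul (Real.add_one_le_exp _) ih (norm_nonneg _) (Real.exp_pos _).le
      _ = ‖x 0‖ * Real.exp (∑ k ∈ Finset.range (n + 1), a k) := by
          rw [Finset.sum_range_succ, Real.exp_add]; ring

lemma cauchySeq_of_norm_succ_sub_le_mul_norm (ha₀ : ∀ n, 0 ≤ a n) (ha : Summable a)
    (hx : ∀ n, ‖x (n + 1) - x n‖ ≤ a n * ‖x n‖) : CauchySeq x := by
  set M := ‖x 0‖ * Real.exp (∑' k, a k)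
  have hbound (n : ℕ) : ‖x n‖ ≤ M :=
    (norm_le_mul_exp_sum_of_norm_succ_sub_le hx n).trans <| mul_le_mul_of_nonneg_left
      (Real.exp_le_exp.2 (ha.sum_le_tsum _ fun k _ => ha₀ k)) (norm_nonneg _)
  refine cauchySeq_of_dist_le_of_summable (fun n => M * a n) (fun n => ?_) (ha.mul_left M)
  rw [dist_comm, dist_eq_norm, mul_comm]
  exact (hx n).trans (mul_le_mul_of_nonneg_left (hbound n) (ha₀ n))

end RelativeIncrements

section PartialProducts

variable {R : Type*} [NormedRing R] {u : ℕ → R}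

lemma cauchySeq_list_prod_map_range (hu : Summable fun k => ‖u k - 1‖) :
    CauchySeq fun n => ((List.range n).map u).prod := by
  refine cauchySeq_of_norm_succ_sub_le_mul_norm (fun _ => norm_nonneg _) hu fun n => ?_
  rw [List.range_succ, List.map_append, List.prod_append, List.map_singleton, List.prod_singleton,
    ← mul_sub_one, mul_comm ‖u n - 1‖]
  exact norm_mul_le _ _

lemma cauchySeq_list_prod_reverse_map_range (hu : Summable fun k => ‖u k - 1‖) :
    CauchySeq fun n => ((List.range n).map u).reverse.prod := by
  refine cauchySeq_of_norm_succ_sub_le_mul_norm (fun _ => norm_nonneg _) hu fun n => ?_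
  rw [List.range_succ, List.map_append, List.reverse_append, List.prod_append, List.map_singleton,
    List.reverse_singleton, List.prod_singleton, ← sub_one_mul]
  exact norm_mul_le _ _

end PartialProducts

lemma summable_norm_exp_sub_one (𝕂 : Type*) {𝔸 : Type*} [RCLike 𝕂] [NormedRing 𝔸]
    [NormedAlgebra 𝕂 𝔸] [CompleteSpace 𝔸] {Z : ℕ → 𝔸} (hZ : Summable fun n => ‖Z n‖) :
    Summable fun n => ‖NormedSpace.exp (Z n) - 1‖ := by
  have hexp : (fun W : 𝔸 => NormedSpace.exp W - 1) =O[nhds 0] fun W => W := by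
    simpa using (hasFDerivAt_exp_zero (𝕂 := 𝕂) (𝔸 := 𝔸)).isBigO_sub
  have hZ₀ : Tendsto Z atTop (nhds 0) :=
    tendsto_zero_iff_norm_tendsto_zero.2 hZ.tendsto_atTop_zero
  exact summable_of_isBigO_nat hZ (hexp.comp_tendsto hZ₀).norm_norm

theorem cauchySeq_symmZassenhausProd_general {𝒜 : Type*} [NormedRing 𝒜] [NormedAlgebra ℂ 𝒜]
    [CompleteSpace 𝒜] (X Y : 𝒜) (C : ℕ → 𝒜) (l : ℝ)
    (hsum : Summable fun j : ℕ => l ^ (j + 2) * ‖C (j + 2)‖) :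
    CauchySeq (fun n : ℕ => symmZassenhausProd X Y C n l) ∧
      ∃ L : 𝒜, Filter.Tendsto (fun n : ℕ => symmZassenhausProd X Y C n l)
        Filter.atTop (nhds L) := by
  set u : ℕ → 𝒜 := fun k => NormedSpace.exp (l ^ (k + 2) • C (k + 2))
  -- summability in `ℝ` is absolute
  have hu : Summable fun k => ‖u k - 1‖ :=
    summable_norm_exp_sub_one ℂ <| by simpa [norm_smul, abs_mul] using hsum.abs
  obtain ⟨G, hG⟩ := cauchySeq_tendsto_of_complete (cauchySeq_list_prod_map_range hu)
  obtain ⟨Q, hQ⟩ := cauchySeq_tendsto_of_complete (cauchySeq_list_prod_reverse_map_range hu)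
  have hΨ : ∀ n, symmZassenhausProd X Y C n l =
      NormedSpace.exp ((l / 2) • X) * NormedSpace.exp ((l / 2) • Y) *
        ((List.range (n - 1)).map u).prod * ((List.range (n - 1)).map u).reverse.prod *
        NormedSpace.exp ((l / 2) • Y) * NormedSpace.exp ((l / 2) • X) := by
    intro n
    simp only [symmZassenhausProd, List.range'_eq_map_range, List.map_map]
    congr 6 <;> ext k <;> simp [u, add_comm]
  have hlim : Tendsto (fun n => symmZassenhausProd X Y C n l) atTop
      (nhds (NormedSpace.exp ((l / 2) • X) * NormedSpace.exp ((l / 2) • Y) * G * Q *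
        NormedSpace.exp ((l / 2) • Y) * NormedSpace.exp ((l / 2) • X))) := by
    simp only [hΨ]
    exact ((((tendsto_const_nhds.mul (hG.comp (tendsto_sub_atTop_nat 1))).mul
      (hQ.comp (tendsto_sub_atTop_nat 1))).mul tendsto_const_nhds).mul tendsto_const_nhds)
  exact ⟨hlim.cauchySeq, _, hlim⟩

/-- If `Σ_{j≥2} λ^j ‖C_j‖` converges, then the truncated symmetric Zassenhaus products
`Ψₙ(λ)` form a Cauchy sequence (hence converge, the algebra being complete). -/
theorem cauchySeq_symmZassenhausProd {𝒜 : Type*} [NormedRing 𝒜] [NormedAlgebra ℂ 𝒜]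
    [CompleteSpace 𝒜] (X Y : 𝒜) (C : ℕ → 𝒜) (l : ℝ) (hl : 0 ≤ l)
    (hsum : Summable fun j : ℕ => l ^ (j + 2) * ‖C (j + 2)‖) :
    CauchySeq (fun n : ℕ => symmZassenhausProd X Y C n l) ∧
      ∃ L : 𝒜, Filter.Tendsto (fun n : ℕ => symmZassenhausProd X Y C n l)
        Filter.atTop (nhds L) :=
  cauchySeq_symmZassenhausProd_general X Y C l hsum
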